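/- arXiv:2507.06182 — 2 statements merged into one kernel-verified Lean document; each statement's English description precedes it below -/
import Mathlib

section
/- The map sending a pair (c, (E_k)_{1 ≤ k < l}) with c ∈ Z and E_k ∈ {L, R} to the chain of i-boxes constructed recursively by 𝔠_1 = {c}, 𝔠_k = [ã_{k-1}-1, b̃_{k-1}} if E_{k-1} = L and 𝔠_k = {ã_{k-1}, b̃_{k-1}+1] if E_{k-1} = R, is a bijection onto the set of chains of i-boxes of length l. -/
open Classical

/-! Positive part `[x]_+ = max(x,0)`. -/
def intPos (x : ℤ) : ℤ := max x 0

/-! ## Matrix mutation (over an arbitrary index type) -/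

/-- Fomin–Zelevinsky matrix mutation of `B` at index `s`. -/
def mutK {K : Type*} [DecidableEq K] (B : K → K → ℤ) (s x y : K) : ℤ :=
  if x = s ∨ y = s then - B x y
  else B x y + intPos (B x s) * intPos (B s y) - intPos (- B x s) * intPos (- B s y)

/-! ## The sequence `i` and occurrence operators -/

/-- `obelow i j y` is the largest `t ≤ y` with `i t = j`  (the operator `y(j)^⊖`). -/
noncomputable def obelow {I : Type*} (i : ℤ → I) (j : I) (y : ℤ) : ℤ :=
  sSup {t : ℤ | t ≤ y ∧ i t = j}

/-- `oabove i j x` is the smallest `t ≥ x` with `i t = j`  (the operator `x(j)^⊕`). -/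
noncomputable def oabove {I : Type*} (i : ℤ → I) (j : I) (x : ℤ) : ℤ :=
  sInf {t : ℤ | x ≤ t ∧ i t = j}

/-- Every letter occurring in `i` occurs (unboundedly) below and above every position;
this guarantees that all the operators `(-)^±, (-)^⊕, (-)^⊖` are well defined. -/
def OccAll {I : Type*} (i : ℤ → I) : Prop :=
  ∀ t x : ℤ, (∃ s, s ≤ x ∧ i s = i t) ∧ (∃ s, x ≤ s ∧ i s = i t)

/-! ## Chains of i-boxes: abstract characterization -/

/-- `IsIBoxChain i l a b atil btil` says that the boxes `𝔠_k = [a k, b k]` (for `1 ≤ k ≤ l`)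
form a chain of `i`-boxes with partial unions `[atil s, btil s]`:
each `𝔠_k` is an `i`-box, each partial union is an interval of length `s`,
and `𝔠_s` is the largest `i`-box of its color contained in the partial union. -/
structure IsIBoxChain {I : Type*} (i : ℤ → I) (l : ℕ) (a b atil btil : ℕ → ℤ) : Prop where
  ibox : ∀ k, 1 ≤ k → k ≤ l → a k ≤ b k ∧ i (a k) = i (b k)
  union_eq : ∀ s, 1 ≤ s → s ≤ l →
    (⋃ k ∈ Set.Icc 1 s, Set.Icc (a k) (b k)) = Set.Icc (atil s) (btil s)
  union_len : ∀ s, 1 ≤ s → s ≤ l → btil s - atil s + 1 = (s : ℤ)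
  largest : ∀ s, 1 ≤ s → s ≤ l → ∀ t, atil s ≤ t → t ≤ btil s → i t = i (a s) →
    a s ≤ t ∧ t ≤ b s

/-! ## Chains of i-boxes from a rooted sequence of expansion operators `(c, E)`
(`E m = true` encodes `L`, `E m = false` encodes `R`). -/

/-- Left end `ã_k` of the `k`-th partial union of the chain with data `(c, E)`. -/
def atilP (c : ℤ) (E : ℕ → Bool) (k : ℕ) : ℤ :=
  c - ((Finset.Ico 1 k).filter (fun m => E m = true)).card

/-- Right end `b̃_k` of the `k`-th partial union of the chain with data `(c, E)`. -/
def btilP (c : ℤ) (E : ℕ → Bool) (k : ℕ) : ℤ :=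
  c + ((Finset.Ico 1 k).filter (fun m => E m = false)).card

/-- Left end `a_k` of the `k`-th box of the chain with data `(c, E)`:
`𝔠_1 = {c}`, `𝔠_k = [ã_{k-1} - 1, b̃_{k-1}}` if `E (k-1) = L`, and
`𝔠_k = {ã_{k-1}, b̃_{k-1} + 1]` if `E (k-1) = R`. -/
noncomputable def aP {I : Type*} (i : ℤ → I) (c : ℤ) (E : ℕ → Bool) (k : ℕ) : ℤ :=
  if k = 1 then c
  else if E (k - 1) then atilP c E k
  else oabove i (i (btilP c E k)) (atilP c E k)

/-- Right end `b_k` of the `k`-th box of the chain with data `(c, E)`. -/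
noncomputable def bP {I : Type*} (i : ℤ → I) (c : ℤ) (E : ℕ → Bool) (k : ℕ) : ℤ :=
  if k = 1 then c
  else if E (k - 1) then obelow i (i (atilP c E k)) (btilP c E k)
  else btilP c E k

/-- The color of the `k`-th box of the chain with data `(c, E)`. -/
noncomputable def colorP {I : Type*} (i : ℤ → I) (c : ℤ) (E : ℕ → Bool) (k : ℕ) : I :=
  i (aP i c E k)

/-- The sign `ε_k` of the `k`-th letter of the signed word associated to a chain:
`+1` if `k = 1` or `E_{k-1} = L`, and `-1` if `E_{k-1} = R`. -/
def epsP (E : ℕ → Bool) (k : ℕ) : ℤ :=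
  if k = 1 ∨ E (k - 1) = true then 1 else -1

/-! ## Box moves -/

/-- The box move `ν_s` on the data `(c, E)` of a chain of i-boxes. -/
def nuMove (s : ℕ) (p : ℤ × (ℕ → Bool)) : ℤ × (ℕ → Bool) :=
  (if s = 1 then (if p.2 1 then p.1 - 1 else p.1 + 1) else p.1,
   fun k => if k = s - 1 ∨ k = s then !(p.2 k) else p.2 k)

/-- `𝔠_s` is a movable box of the chain of length `l` with data `p = (c, E)`. -/
def Movable (l s : ℕ) (p : ℤ × (ℕ → Bool)) : Prop :=
  1 ≤ s ∧ s < l ∧ (s = 1 ∨ (2 ≤ s ∧ p.2 (s - 1) ≠ p.2 s))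

/-- One box move (at some movable position) relating two chains. -/
def moveRel (l : ℕ) (p q : ℤ × (ℕ → Bool)) : Prop :=
  ∃ s, Movable l s p ∧ q = nuMove s p

/-- Two chain data `(c, E)`, `(c', E')` of length `l` describe the same chain:
same root and same expansion operators on the relevant range `[1, l-1]`. -/
def pairEqOn (l : ℕ) (p q : ℤ × (ℕ → Bool)) : Prop :=
  p.1 = q.1 ∧ ∀ m, 1 ≤ m → m < l → p.2 m = q.2 m

/-! ## Signed words and the Berenstein–Fomin–Zelevinsky matrix -/

/-- `nxt h l k = k[1]`, the smallest `k' ∈ [k+1, l]` with `h k' = h k`, as an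
element of `ℕ∞` (`⊤ = ∞` if there is none). -/
noncomputable def nxt {I : Type*} (h : ℕ → I) (l k : ℕ) : ℕ∞ :=
  sInf {x : ℕ∞ | ∃ k' : ℕ, x = (k' : ℕ∞) ∧ k < k' ∧ k' ≤ l ∧ h k' = h k}

/-- The exchangeable indices `K^ex` of a word of length `l` with letters `h`. -/
def Kex {I : Type*} (h : ℕ → I) (l : ℕ) : Set ℕ :=
  {s | 1 ≤ s ∧ ∃ t, s < t ∧ t ≤ l ∧ h t = h s}

/-- BFZ case: `ε_{j[1]} = ε_k` and `j < k < j[1] < k[1]`. -/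
noncomputable def condI {I : Type*} (ε : ℕ → ℤ) (h : ℕ → I) (l j k : ℕ) : Prop :=
  ∃ j1 : ℕ, nxt h l j = (j1 : ℕ∞) ∧ ε j1 = ε k ∧ j < k ∧ k < j1 ∧ (j1 : ℕ∞) < nxt h l k

/-- BFZ case: `ε_k = -ε_{k[1]}` and `j < k < k[1] < j[1]`. -/
noncomputable def condII {I : Type*} (ε : ℕ → ℤ) (h : ℕ → I) (l j k : ℕ) : Prop :=
  ∃ k1 : ℕ, nxt h l k = (k1 : ℕ∞) ∧ ε k = - ε k1 ∧ j < k ∧ k < k1 ∧ (k1 : ℕ∞) < nxt h l j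

/-- BFZ case: `ε_{k[1]} = ε_j` and `k < j < k[1] < j[1]`. -/
noncomputable def condIII {I : Type*} (ε : ℕ → ℤ) (h : ℕ → I) (l j k : ℕ) : Prop :=
  ∃ k1 : ℕ, nxt h l k = (k1 : ℕ∞) ∧ ε k1 = ε j ∧ k < j ∧ j < k1 ∧ (k1 : ℕ∞) < nxt h l j

/-- BFZ case: `ε_j = -ε_{j[1]}` and `k < j < j[1] < k[1]`. -/
noncomputable def condIV {I : Type*} (ε : ℕ → ℤ) (h : ℕ → I) (l j k : ℕ) : Prop :=
  ∃ j1 : ℕ, nxt h l j = (j1 : ℕ∞) ∧ ε j = - ε j1 ∧ k < j ∧ j < j1 ∧ (j1 : ℕ∞) < nxt h l k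

/-- The Berenstein–Fomin–Zelevinsky matrix `B̃(h)` of the signed word with letters `h`
and signs `ε` of length `l`, over the generalized Cartan matrix `C`. -/
noncomputable def Btilde {I : Type*} (C : I → I → ℤ) (ε : ℕ → ℤ) (h : ℕ → I)
    (l j k : ℕ) : ℤ :=
  if nxt h l j = (k : ℕ∞) then ε k
  else if nxt h l k = (j : ℕ∞) then - ε j
  else if condI ε h l j k ∨ condII ε h l j k then ε k * C (h j) (h k)
  else if condIII ε h l j k ∨ condIV ε h l j k then - (ε j * C (h j) (h k))
  else 0

/-- The Kashiwara–Kim–Oh–Park initial exchange matrix `B(𝔠_-^{[a,b]})`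
(for the word with letters `h k = i_{b-k+1}`, all signs being `+1`). -/
noncomputable def Binit {I : Type*} (C : I → I → ℤ) (h : ℕ → I) (l j k : ℕ) : ℤ :=
  if nxt h l j = (k : ℕ∞) then 1
  else if nxt h l k = (j : ℕ∞) then -1
  else if j < k ∧ (k : ℕ∞) < nxt h l j ∧ nxt h l j < nxt h l k then C (h j) (h k)
  else if k < j ∧ (j : ℕ∞) < nxt h l k ∧ nxt h l k < nxt h l j then - C (h j) (h k)
  else 0

/-! The chain is rebuilt from its partial unions alone: the box added at step `s + 1`
must contain the one new point of `[ã_{s+1}, b̃_{s+1}]`, which is therefore an endpoint of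
the box, and the largest i-box of that color starting (or ending) there is unique. The
partial unions in turn are the data `(c, E)`, read off as the first point and the sides
on which the interval grows. -/

section Occurrence

variable {I : Type*} {i : ℤ → I} {j : I}

theorem isGreatest_obelow {y : ℤ} (h : ∃ t ≤ y, i t = j) :
    IsGreatest {t | t ≤ y ∧ i t = j} (obelow i j y) := by
  have hbdd : BddAbove {t | t ≤ y ∧ i t = j} := ⟨y, fun _ ht => ht.1⟩
  obtain ⟨t, ht⟩ := h
  exact ⟨Int.csSup_mem ⟨t, ht⟩ hbdd, fun _ hs => le_csSup hbdd hs⟩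

theorem isLeast_oabove {x : ℤ} (h : ∃ t, x ≤ t ∧ i t = j) :
    IsLeast {t | x ≤ t ∧ i t = j} (oabove i j x) := by
  have hbdd : BddBelow {t | x ≤ t ∧ i t = j} := ⟨x, fun _ ht => ht.1⟩
  obtain ⟨t, ht⟩ := h
  exact ⟨Int.csInf_mem ⟨t, ht⟩ hbdd, fun _ hs => csInf_le hbdd hs⟩

end Occurrence

section LargestBox

variable {I : Type*} {i : ℤ → I} {p q a b a' b' : ℤ}

structure IsLargestIBoxIn (i : ℤ → I) (p q a b : ℤ) : Prop where
  le_left : p ≤ a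
  left_le_right : a ≤ b
  right_le : b ≤ q
  color_eq : i a = i b
  le_of_color : ∀ t, p ≤ t → t ≤ q → i t = i a → a ≤ t ∧ t ≤ b

theorem isLargestIBoxIn_obelow (h : p ≤ q) : IsLargestIBoxIn i p q p (obelow i (i p) q) := by
  have hg := isGreatest_obelow (i := i) ⟨p, h, rfl⟩
  exact ⟨le_rfl, hg.2 ⟨h, rfl⟩, hg.1.1, hg.1.2.symm,
    fun t hpt htq hc => ⟨hpt, hg.2 ⟨htq, hc⟩⟩⟩

theorem isLargestIBoxIn_oabove (h : p ≤ q) : IsLargestIBoxIn i p q (oabove i (i q) p) q := by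
  have hl := isLeast_oabove (i := i) ⟨q, h, rfl⟩
  exact ⟨hl.1.1, hl.2 ⟨h, rfl⟩, le_rfl, hl.1.2,
    fun t hpt htq hc => ⟨hl.2 ⟨hpt, hc.trans hl.1.2⟩, htq⟩⟩

theorem IsLargestIBoxIn.right_unique (h : IsLargestIBoxIn i p q a b)
    (h' : IsLargestIBoxIn i p q a b') : b = b' :=
  le_antisymm
    (h'.le_of_color b (h.le_left.trans h.left_le_right) h.right_le h.color_eq.symm).2
    (h.le_of_color b' (h'.le_left.trans h'.left_le_right) h'.right_le h'.color_eq.symm).2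

theorem IsLargestIBoxIn.left_unique (h : IsLargestIBoxIn i p q a b)
    (h' : IsLargestIBoxIn i p q a' b) : a = a' :=
  le_antisymm
    (h.le_of_color a' h'.le_left (h'.left_le_right.trans h'.right_le)
      (h'.color_eq.trans h.color_eq.symm)).1
    (h'.le_of_color a h.le_left (h.left_le_right.trans h.right_le)
      (h.color_eq.trans h'.color_eq.symm)).1

end LargestBox

theorem biUnion_Icc_one_succ {α : Type*} (f : ℕ → Set α) (s : ℕ) :
    ⋃ k ∈ Set.Icc 1 (s + 1), f k = (⋃ k ∈ Set.Icc 1 s, f k) ∪ f (s + 1) := by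
  rw [← Set.insert_Icc_right_eq_Icc_add_one (by omega), Set.biUnion_insert, Set.union_comm]

section Pair

variable {I : Type*} (i : ℤ → I) (c : ℤ) (E : ℕ → Bool)

@[simp] theorem atilP_one : atilP c E 1 = c := by simp [atilP]

@[simp] theorem btilP_one : btilP c E 1 = c := by simp [btilP]

theorem atilP_succ {k : ℕ} (hk : 1 ≤ k) :
    atilP c E (k + 1) = atilP c E k - if E k then 1 else 0 := by
  unfold atilP
  rw [← Finset.insert_Ico_right_eq_Ico_add_one hk, Finset.filter_insert]
  cases E k <;> simp [sub_sub]

theorem btilP_succ {k : ℕ} (hk : 1 ≤ k) :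
    btilP c E (k + 1) = btilP c E k + if E k then 0 else 1 := by
  unfold btilP
  rw [← Finset.insert_Ico_right_eq_Ico_add_one hk, Finset.filter_insert]
  cases E k <;> simp [add_assoc]

theorem btilP_sub_atilP {k : ℕ} (hk : 1 ≤ k) : btilP c E k - atilP c E k = k - 1 := by
  induction k, hk using Nat.le_induction with
  | base => simp
  | succ n hn ih =>
    rw [atilP_succ c E hn, btilP_succ c E hn]
    split_ifs <;> push_cast <;> omega

theorem atilP_succ_eq_sub_one_iff {k : ℕ} (hk : 1 ≤ k) :
    atilP c E (k + 1) = atilP c E k - 1 ↔ E k = true := by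
  rw [atilP_succ c E hk]
  cases E k <;> simp [eq_sub_iff_add_eq]

theorem eq_of_atilP_eq {c' : ℤ} {E' : ℕ → Bool} {l : ℕ} (hl : 1 ≤ l)
    (h : ∀ k, 1 ≤ k → k ≤ l → atilP c E k = atilP c' E' k) :
    c = c' ∧ ∀ m, 1 ≤ m → m < l → E m = E' m := by
  refine ⟨by simpa using h 1 le_rfl hl, fun m hm hml => Bool.eq_iff_iff.mpr ?_⟩
  rw [← atilP_succ_eq_sub_one_iff c E hm, ← atilP_succ_eq_sub_one_iff c' E' hm,
    h m hm hml.le, h (m + 1) (by omega) hml]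

@[simp] theorem aP_one : aP i c E 1 = c := by simp [aP]

@[simp] theorem bP_one : bP i c E 1 = c := by simp [bP]

theorem aP_succ {k : ℕ} (hk : 1 ≤ k) :
    aP i c E (k + 1) =
      if E k then atilP c E (k + 1) else oabove i (i (btilP c E (k + 1))) (atilP c E (k + 1)) := by
  simp only [aP, if_neg (show k + 1 ≠ 1 by omega), Nat.add_sub_cancel]

theorem bP_succ {k : ℕ} (hk : 1 ≤ k) :
    bP i c E (k + 1) =
      if E k then obelow i (i (atilP c E (k + 1))) (btilP c E (k + 1)) else btilP c E (k + 1) := by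
  simp only [bP, if_neg (show k + 1 ≠ 1 by omega), Nat.add_sub_cancel]

theorem isLargestIBoxIn_aP_bP {k : ℕ} (hk : 1 ≤ k) :
    IsLargestIBoxIn i (atilP c E k) (btilP c E k) (aP i c E k) (bP i c E k) := by
  obtain rfl | hk := hk.eq_or_lt
  · simpa using ⟨le_rfl, le_rfl, le_rfl, rfl, fun t h1 h2 _ => ⟨h1, h2⟩⟩
  obtain ⟨m, hm, rfl⟩ : ∃ m, 1 ≤ m ∧ k = m + 1 := ⟨k - 1, by omega, by omega⟩
  have hle : atilP c E (m + 1) ≤ btilP c E (m + 1) := by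
    have := btilP_sub_atilP c E (k := m + 1) (by omega)
    omega
  rw [aP_succ i c E hm, bP_succ i c E hm]
  split_ifs
  · exact isLargestIBoxIn_obelow hle
  · exact isLargestIBoxIn_oabove hle

theorem biUnion_Icc_aP_bP {s : ℕ} (hs : 1 ≤ s) :
    ⋃ k ∈ Set.Icc 1 s, Set.Icc (aP i c E k) (bP i c E k) =
      Set.Icc (atilP c E s) (btilP c E s) := by
  induction s, hs using Nat.le_induction with
  | base => simp
  | succ n hn ih =>
    rw [biUnion_Icc_one_succ, ih]
    obtain ⟨h1, h2, h3, -, -⟩ := isLargestIBoxIn_aP_bP i c E (k := n + 1) (by omega)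
    have hA := atilP_succ c E hn
    have hB := btilP_succ c E hn
    have ha := aP_succ i c E hn
    have hb := bP_succ i c E hn
    ext x
    simp only [Set.mem_union, Set.mem_Icc]
    cases hE : E n <;> simp only [hE, Bool.false_eq_true, if_true, if_false] at hA hB ha hb <;>
      omega

theorem isIBoxChain_aP_bP (l : ℕ) :
    IsIBoxChain i l (aP i c E) (bP i c E) (atilP c E) (btilP c E) where
  ibox _ hk _ := ⟨(isLargestIBoxIn_aP_bP i c E hk).left_le_right,
    (isLargestIBoxIn_aP_bP i c E hk).color_eq⟩
  union_eq _ hs _ := biUnion_Icc_aP_bP i c E hs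
  union_len s hs _ := by
    have := btilP_sub_atilP c E hs
    omega
  largest _ hs _ := (isLargestIBoxIn_aP_bP i c E hs).le_of_color

end Pair

namespace IsIBoxChain

variable {I : Type*} {i : ℤ → I} {l s k : ℕ} {a b atil btil a' b' atil' btil' : ℕ → ℤ}

theorem box_subset_union (H : IsIBoxChain i l a b atil btil) (hk1 : 1 ≤ k) (hkl : k ≤ l) :
    Set.Icc (a k) (b k) ⊆ Set.Icc (atil k) (btil k) :=
  H.union_eq k hk1 hkl ▸
    Set.subset_biUnion_of_mem (u := fun k => Set.Icc (a k) (b k)) ⟨hk1, le_rfl⟩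

theorem isLargestIBoxIn (H : IsIBoxChain i l a b atil btil) (hk1 : 1 ≤ k) (hkl : k ≤ l) :
    IsLargestIBoxIn i (atil k) (btil k) (a k) (b k) := by
  obtain ⟨hab, hcol⟩ := H.ibox k hk1 hkl
  have hsub := H.box_subset_union hk1 hkl
  exact ⟨(hsub ⟨le_rfl, hab⟩).1, hab, (hsub ⟨hab, le_rfl⟩).2, hcol, H.largest k hk1 hkl⟩

theorem union_succ (H : IsIBoxChain i l a b atil btil) (hs : 1 ≤ s) (hsl : s < l) :
    Set.Icc (atil (s + 1)) (btil (s + 1)) =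
      Set.Icc (atil s) (btil s) ∪ Set.Icc (a (s + 1)) (b (s + 1)) := by
  rw [← H.union_eq s hs hsl.le, ← H.union_eq (s + 1) (by omega) hsl, biUnion_Icc_one_succ]

theorem step (H : IsIBoxChain i l a b atil btil) (hs : 1 ≤ s) (hsl : s < l) :
    (atil (s + 1) = atil s - 1 ∧ btil (s + 1) = btil s) ∨
      (atil (s + 1) = atil s ∧ btil (s + 1) = btil s + 1) := by
  have hsub : Set.Icc (atil s) (btil s) ⊆ Set.Icc (atil (s + 1)) (btil (s + 1)) :=
    H.union_succ hs hsl ▸ Set.subset_union_left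
  have hlen := H.union_len s hs hsl.le
  have hlen' := H.union_len (s + 1) (by omega) hsl
  have hleft := hsub ⟨le_rfl, by omega⟩
  have hright := hsub ⟨by omega, le_rfl⟩
  push_cast at hlen'
  simp only [Set.mem_Icc] at hleft hright
  omega

theorem left_eq_of_step_left (H : IsIBoxChain i l a b atil btil) (hs : 1 ≤ s) (hsl : s < l)
    (h : atil (s + 1) = atil s - 1) : a (s + 1) = atil (s + 1) := by
  have hlen := H.union_len (s + 1) (by omega) hsl
  have hmem : atil (s + 1) ∈ Set.Icc (a (s + 1)) (b (s + 1)) := by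
    have hnew : atil (s + 1) ∈ Set.Icc (atil (s + 1)) (btil (s + 1)) := ⟨le_rfl, by omega⟩
    rw [H.union_succ hs hsl] at hnew
    exact hnew.resolve_left fun hold => by linarith [hold.1]
  exact le_antisymm hmem.1 (H.isLargestIBoxIn (by omega) hsl).le_left

theorem right_eq_of_step_right (H : IsIBoxChain i l a b atil btil) (hs : 1 ≤ s) (hsl : s < l)
    (h : btil (s + 1) = btil s + 1) : b (s + 1) = btil (s + 1) := by
  have hlen := H.union_len (s + 1) (by omega) hsl
  have hmem : btil (s + 1) ∈ Set.Icc (a (s + 1)) (b (s + 1)) := by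
    have hnew : btil (s + 1) ∈ Set.Icc (atil (s + 1)) (btil (s + 1)) := ⟨by omega, le_rfl⟩
    rw [H.union_succ hs hsl] at hnew
    exact hnew.resolve_left fun hold => by linarith [hold.2]
  exact le_antisymm (H.isLargestIBoxIn (by omega) hsl).right_le hmem.2

theorem boxes_eq_of_unions_eq (H : IsIBoxChain i l a b atil btil)
    (H' : IsIBoxChain i l a' b' atil' btil')
    (hunion : ∀ k, 1 ≤ k → k ≤ l → atil' k = atil k ∧ btil' k = btil k) :
    ∀ k, 1 ≤ k → k ≤ l → a' k = a k ∧ b' k = b k := by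
  intro k hk1 hkl
  have hbox := H.isLargestIBoxIn hk1 hkl
  have hbox' := H'.isLargestIBoxIn hk1 hkl
  rw [(hunion k hk1 hkl).1, (hunion k hk1 hkl).2] at hbox'
  obtain rfl | hk := hk1.eq_or_lt
  · have hlen := H.union_len 1 le_rfl hkl
    obtain ⟨h1, h2, h3, -, -⟩ := hbox
    obtain ⟨h1', h2', h3', -, -⟩ := hbox'
    push_cast at hlen
    omega
  obtain ⟨s, hs, rfl⟩ : ∃ s, 1 ≤ s ∧ k = s + 1 := ⟨k - 1, by omega, by omega⟩
  obtain ⟨hA, hB⟩ := hunion s hs (by omega)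
  obtain ⟨hA', hB'⟩ := hunion (s + 1) hk1 hkl
  rcases H.step hs hkl with ⟨hleft, -⟩ | ⟨-, hright⟩
  · have ha : a' (s + 1) = a (s + 1) := by
      rw [H'.left_eq_of_step_left hs hkl (by omega), H.left_eq_of_step_left hs hkl hleft, hA']
    rw [ha] at hbox' ⊢
    exact ⟨rfl, hbox'.right_unique hbox⟩
  · have hb : b' (s + 1) = b (s + 1) := by
      rw [H'.right_eq_of_step_right hs hkl (by omega), H.right_eq_of_step_right hs hkl hright, hB']
    rw [hb] at hbox' ⊢
    exact ⟨hbox'.left_unique hbox, rfl⟩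

theorem unions_eq_of_boxes_eq (H : IsIBoxChain i l a b atil btil)
    (H' : IsIBoxChain i l a' b' atil' btil')
    (hbox : ∀ k, 1 ≤ k → k ≤ l → a' k = a k ∧ b' k = b k) :
    ∀ k, 1 ≤ k → k ≤ l → atil' k = atil k ∧ btil' k = btil k := by
  intro s hs hsl
  have hunion : Set.Icc (atil' s) (btil' s) = Set.Icc (atil s) (btil s) := by
    rw [← H.union_eq s hs hsl, ← H'.union_eq s hs hsl]
    refine Set.iUnion₂_congr fun k hk => ?_
    rw [(hbox k hk.1 (hk.2.trans hsl)).1, (hbox k hk.1 (hk.2.trans hsl)).2]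
  have hlen := H'.union_len s hs hsl
  exact (Set.Icc_eq_Icc_iff (by omega)).mp hunion

theorem exists_atilP_btilP_eq (H : IsIBoxChain i l a b atil btil) :
    ∃ c E, ∀ k, 1 ≤ k → k ≤ l → atilP c E k = atil k ∧ btilP c E k = btil k := by
  refine ⟨atil 1, fun m => decide (atil (m + 1) = atil m - 1), fun k hk => ?_⟩
  induction k, hk using Nat.le_induction with
  | base =>
    intro hl
    have hlen := H.union_len 1 le_rfl hl
    push_cast at hlen
    exact ⟨atilP_one _ _, by rw [btilP_one]; omega⟩
  | succ n hn ih =>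
    intro hnl
    obtain ⟨hA, hB⟩ := ih (by omega)
    rw [atilP_succ _ _ hn, btilP_succ _ _ hn, hA, hB]
    rcases H.step hn hnl with ⟨h1, h2⟩ | ⟨h1, h2⟩ <;> simp [h1, h2, eq_sub_iff_add_eq]

end IsIBoxChain

theorem pair_chain_bijection_general {I : Type*} (i : ℤ → I)
    (l : ℕ) (hl : 1 ≤ l) :
    (∀ c E, IsIBoxChain i l (aP i c E) (bP i c E) (atilP c E) (btilP c E)) ∧
    (∀ a b atil btil, IsIBoxChain i l a b atil btil →
      ∃ c E, (∀ k, 1 ≤ k → k ≤ l → aP i c E k = a k ∧ bP i c E k = b k) ∧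
        (∀ c' E', (∀ k, 1 ≤ k → k ≤ l → aP i c' E' k = a k ∧ bP i c' E' k = b k) →
          c' = c ∧ ∀ m, 1 ≤ m → m < l → E' m = E m)) := by
  refine ⟨fun c E => isIBoxChain_aP_bP i c E l, fun a b atil btil H => ?_⟩
  obtain ⟨c, E, hunion⟩ := H.exists_atilP_btilP_eq
  refine ⟨c, E, H.boxes_eq_of_unions_eq (isIBoxChain_aP_bP i c E l) hunion,
    fun c' E' hbox => ?_⟩
  have hunion' := H.unions_eq_of_boxes_eq (isIBoxChain_aP_bP i c' E' l) hbox
  exact eq_of_atilP_eq c' E' hl fun k hk hkl =>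
    (hunion' k hk hkl).1.trans (hunion k hk hkl).1.symm

/-- The map `(c, (E_k)) ↦ chain of i-boxes` is a bijection onto the
set of chains of `i`-boxes of length `l`: every pair gives a chain, and every chain
comes from a pair which is unique (as a root together with the expansion operators on
the relevant range `[1, l-1]`). -/
theorem pair_chain_bijection {I : Type*} (i : ℤ → I) (hocc : OccAll i)
    (l : ℕ) (hl : 1 ≤ l) :
    (∀ c E, IsIBoxChain i l (aP i c E) (bP i c E) (atilP c E) (btilP c E)) ∧
    (∀ a b atil btil, IsIBoxChain i l a b atil btil →
      ∃ c E, (∀ k, 1 ≤ k → k ≤ l → aP i c E k = a k ∧ bP i c E k = b k) ∧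
        (∀ c' E', (∀ k, 1 ≤ k → k ≤ l → aP i c' E' k = a k ∧ bP i c' E' k = b k) →
          c' = c ∧ ∀ m, 1 ≤ m → m < l → E' m = E m)) :=
  pair_chain_bijection_general i l hl
end

section
/- Reversal duality for signed-word conditions: let σ: ℤ → ℤ be x ↦ −x, let i' = (i'_k) with i'_k = i_{−k}, and for a chain of i-boxes 𝔠 = (𝔠_s) with 𝔠_s = [a_s, b_s] define the chain of i'-boxes 𝔠' = (𝔠'_s) with 𝔠'_s = [−b_s, −a_s]. Then 𝔠' is a chain of i'-boxes, and for any j, k, the signed word h(𝔠) satisfies condition (i): ε_{j[1]} = ε_k = −1, j < k < j[1] < k[1], if and only if the signed word h(𝔠') satisfies condition (iii) with j and k swapped: ε'_{k[1]} = ε'_j = +1, j < k < j[1] < k[1] (indices in the swapped roles); and similarly conditions (ii) ↔ (iv) correspond under this duality. -/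
open Classical

/-- Signed condition (i): `ε_{j[1]} = ε_k = -1` and `j < k < j[1] < k[1]`. -/
noncomputable def scondI {I : Type*} (ε : ℕ → ℤ) (h : ℕ → I) (l j k : ℕ) : Prop :=
  ∃ j1 : ℕ, nxt h l j = (j1 : ℕ∞) ∧ ε j1 = -1 ∧ ε k = -1 ∧
    j < k ∧ k < j1 ∧ (j1 : ℕ∞) < nxt h l k

/-- Signed condition (ii): `ε_k = -ε_{k[1]} = -1` and `j < k < k[1] < j[1]`. -/
noncomputable def scondII {I : Type*} (ε : ℕ → ℤ) (h : ℕ → I) (l j k : ℕ) : Prop :=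
  ∃ k1 : ℕ, nxt h l k = (k1 : ℕ∞) ∧ ε k = -1 ∧ ε k1 = 1 ∧
    j < k ∧ k < k1 ∧ (k1 : ℕ∞) < nxt h l j

/-- Signed condition (iii): `ε_{k[1]} = ε_j = 1` and `k < j < k[1] < j[1]`. -/
noncomputable def scondIII {I : Type*} (ε : ℕ → ℤ) (h : ℕ → I) (l j k : ℕ) : Prop :=
  ∃ k1 : ℕ, nxt h l k = (k1 : ℕ∞) ∧ ε k1 = 1 ∧ ε j = 1 ∧
    k < j ∧ j < k1 ∧ (k1 : ℕ∞) < nxt h l j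

/-- Signed condition (iv): `ε_j = -ε_{j[1]} = 1` and `k < j < j[1] < k[1]`. -/
noncomputable def scondIV {I : Type*} (ε : ℕ → ℤ) (h : ℕ → I) (l j k : ℕ) : Prop :=
  ∃ j1 : ℕ, nxt h l j = (j1 : ℕ∞) ∧ ε j = 1 ∧ ε j1 = -1 ∧
    k < j ∧ j < j1 ∧ (j1 : ℕ∞) < nxt h l k

/-!
Reflecting `ℤ` by `x ↦ -x` exchanges the occurrence operators `⊕` and `⊖` and swaps the
two ends of every interval, so it turns the chain with data `(c, E)` into the chain with data
`(-c, !E)`, box by box, and it preserves the colour of every box. The letters of the signed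
word are therefore unchanged, while every sign `ε_k` with `k ≥ 2` flips; since condition (i)
asks for two signs `-1` where condition (iii) asks for `+1` in the same positions (and
likewise for (ii) and (iv)), the conditions correspond.
-/

open scoped Pointwise

section Reversal

variable {I : Type*} {i : ℤ → I}

lemma OccAll.color_obelow (hocc : OccAll i) (t y : ℤ) : i (obelow i (i t) y) = i t :=
  (Int.csSup_mem (hocc t y).1 ⟨y, fun _ hs => hs.1⟩).2

lemma OccAll.color_oabove (hocc : OccAll i) (t x : ℤ) : i (oabove i (i t) x) = i t :=
  (Int.csInf_mem (hocc t x).2 ⟨x, fun _ hs => hs.1⟩).2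

lemma oabove_comp_neg (hocc : OccAll i) (t y : ℤ) :
    oabove (fun x => i (-x)) (i t) (-y) = -obelow i (i t) y := by
  have hreflect : {s : ℤ | -y ≤ s ∧ i (-s) = i t} = -{s : ℤ | s ≤ y ∧ i s = i t} := by
    ext s
    simp only [Set.mem_neg, Set.mem_ofPred_eq, neg_le]
  rw [oabove, obelow, hreflect]
  exact csInf_neg (hocc t y).1 ⟨y, fun _ hs => hs.1⟩

lemma obelow_comp_neg (hocc : OccAll i) (t x : ℤ) :
    obelow (fun x => i (-x)) (i t) (-x) = -oabove i (i t) x := by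
  have hreflect : {s : ℤ | s ≤ -x ∧ i (-s) = i t} = -{s : ℤ | x ≤ s ∧ i s = i t} := by
    ext s
    simp only [Set.mem_neg, Set.mem_ofPred_eq, le_neg]
  rw [oabove, obelow, hreflect]
  exact csSup_neg (hocc t x).2 ⟨x, fun _ hs => hs.1⟩

lemma atilP_reverse (c : ℤ) (E : ℕ → Bool) (k : ℕ) :
    atilP (-c) (fun m => !E m) k = -btilP c E k := by
  simp only [atilP, btilP, Bool.not_eq_true']
  ring

lemma btilP_reverse (c : ℤ) (E : ℕ → Bool) (k : ℕ) :
    btilP (-c) (fun m => !E m) k = -atilP c E k := by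
  simp only [atilP, btilP, Bool.not_eq_false']
  ring

lemma aP_reverse (hocc : OccAll i) (c : ℤ) (E : ℕ → Bool) (k : ℕ) :
    aP (fun x => i (-x)) (-c) (fun m => !E m) k = -bP i c E k := by
  unfold aP bP
  split_ifs <;> simp_all [atilP_reverse, btilP_reverse, oabove_comp_neg hocc]

lemma bP_reverse (hocc : OccAll i) (c : ℤ) (E : ℕ → Bool) (k : ℕ) :
    bP (fun x => i (-x)) (-c) (fun m => !E m) k = -aP i c E k := by
  unfold aP bP
  split_ifs <;> simp_all [atilP_reverse, btilP_reverse, obelow_comp_neg hocc]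

lemma color_aP_eq_color_bP (hocc : OccAll i) (c : ℤ) (E : ℕ → Bool) (k : ℕ) :
    i (aP i c E k) = i (bP i c E k) := by
  unfold aP bP
  split_ifs
  · rfl
  · exact (hocc.color_obelow _ _).symm
  · exact hocc.color_oabove _ _

lemma colorP_reverse (hocc : OccAll i) (c : ℤ) (E : ℕ → Bool) :
    colorP (fun x => i (-x)) (-c) (fun m => !E m) = colorP i c E := by
  funext k
  simp only [colorP, aP_reverse hocc, neg_neg]
  exact (color_aP_eq_color_bP hocc c E k).symm

lemma IsIBoxChain.reverse {l : ℕ} {a b atil btil : ℕ → ℤ}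
    (h : IsIBoxChain i l a b atil btil) :
    IsIBoxChain (fun x => i (-x)) l (fun s => -b s) (fun s => -a s)
      (fun s => -btil s) (fun s => -atil s) where
  ibox k hk hkl := by
    obtain ⟨hab, hcol⟩ := h.ibox k hk hkl
    exact ⟨neg_le_neg hab, by simp only [neg_neg, hcol]⟩
  union_eq s hs hsl := by
    simp only [← Set.neg_Icc, ← Set.iUnion_neg, h.union_eq s hs hsl]
  union_len s hs hsl := by
    linarith [h.union_len s hs hsl]
  largest s hs hsl t ht hts hcol := by
    rw [neg_neg, ← (h.ibox s hs hsl).2] at hcol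
    have := h.largest s hs hsl (-t) (by linarith) (by linarith) hcol
    constructor <;> linarith

end Reversal

lemma epsP_reverse (E : ℕ → Bool) {k : ℕ} (hk : 2 ≤ k) :
    epsP (fun m => !E m) k = -epsP E k := by
  have hk1 : k ≠ 1 := by omega
  cases hE : E (k - 1) <;> simp [epsP, hk1, hE]

section SignedConditions

variable {I : Type*} {ε ε' : ℕ → ℤ} (h : ℕ → I) {l j k : ℕ}

lemma scondI_iff_scondIII_swap (hε : ∀ n, 2 ≤ n → ε' n = -ε n) (hj : 1 ≤ j) :
    scondI ε h l j k ↔ scondIII ε' h l k j := by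
  refine exists_congr fun j1 => ⟨?_, ?_⟩ <;>
    rintro ⟨hnxt, hj1, hk, hjk, hkj1, hlt⟩ <;>
    exact ⟨hnxt, by linarith [hε j1 (by omega)], by linarith [hε k (by omega)],
      hjk, hkj1, hlt⟩

lemma scondII_iff_scondIV_swap (hε : ∀ n, 2 ≤ n → ε' n = -ε n) (hj : 1 ≤ j) :
    scondII ε h l j k ↔ scondIV ε' h l k j := by
  refine exists_congr fun k1 => ⟨?_, ?_⟩ <;>
    rintro ⟨hnxt, hk, hk1, hjk, hkk1, hlt⟩ <;>
    exact ⟨hnxt, by linarith [hε k (by omega)], by linarith [hε k1 (by omega)],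
      hjk, hkk1, hlt⟩

end SignedConditions

/-- Reversal duality: let `i' x = i (-x)` and let `𝔠'` be the chain
of `i'`-boxes with boxes `[-b_s, -a_s]`. Then `𝔠'` is a chain of `i'`-boxes — for a
chain with data `(c, E)` it is the chain with data `(-c, !E)`, and reversal of an
abstract chain is an abstract chain — and the signed word of `𝔠` satisfies condition
(i) (resp. (ii)) at `(j,k)` iff the signed word of `𝔠'` satisfies condition (iii)
(resp. (iv)) with `j` and `k` swapped. -/
theorem reversal_duality {I : Type*} (i : ℤ → I) (hocc : OccAll i)
    (c : ℤ) (E : ℕ → Bool) (l : ℕ) :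
    (∀ k, 1 ≤ k → k ≤ l →
      aP (fun x => i (-x)) (-c) (fun m => !(E m)) k = -(bP i c E k) ∧
      bP (fun x => i (-x)) (-c) (fun m => !(E m)) k = -(aP i c E k)) ∧
    (∀ a b atil btil, IsIBoxChain i l a b atil btil →
      IsIBoxChain (fun x => i (-x)) l (fun s => - b s) (fun s => - a s)
        (fun s => - btil s) (fun s => - atil s)) ∧
    (∀ j k, 1 ≤ j → 1 ≤ k →
      (scondI (epsP E) (colorP i c E) l j k ↔
        scondIII (epsP (fun m => !(E m))) (colorP (fun x => i (-x)) (-c) (fun m => !(E m))) l k j)) ∧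
    (∀ j k, 1 ≤ j → 1 ≤ k →
      (scondII (epsP E) (colorP i c E) l j k ↔
        scondIV (epsP (fun m => !(E m))) (colorP (fun x => i (-x)) (-c) (fun m => !(E m))) l k j)) := by
  rw [colorP_reverse hocc]
  have hε : ∀ n, 2 ≤ n → epsP (fun m => !E m) n = -epsP E n := fun _ => epsP_reverse E
  exact ⟨fun k _ _ => ⟨aP_reverse hocc c E k, bP_reverse hocc c E k⟩,
    fun _ _ _ _ h => h.reverse,
    fun _ _ hj _ => scondI_iff_scondIII_swap _ hε hj,
    fun _ _ hj _ => scondII_iff_scondIV_swap _ hε hj⟩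
end
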